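/- arXiv:1511.05137 — 7 statements merged into one kernel-verified Lean document; each statement's English description precedes it below -/
import Mathlib

section
/- Let H(t) be a real-valued, bounded, continuously differentiable function on (0,∞) such that H'(t) → 0 as t → ∞. Then for every constant 0 < A < ∞ there exists a sequence T_k → ∞ such that (1/A) ∫_{T_k}^{T_k+A} t·H'(t) dt → 0 as k → ∞. -/
/-!
Split `∫_T^{T+A} t H'(t) dt = ∫_T^{T+A} (t - T) H'(t) dt + T (H(T+A) - H(T))`. The first term is
at most `A² sup |H'|`, which is small for large `T`. For the second, `G(T) = H(T+A) - H(T)` has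
bounded integrals `∫_B^X G = ∫_X^{X+A} H - ∫_B^{B+A} H`. If `T |G(T)| ≥ ε` held for all large `T`,
then `G` would have no zeros, hence a constant sign, and `∫_B^X |G| ≥ ε log (X / B)` would be
unbounded. So `T |G(T)|` is frequently small, which makes `0` a cluster point of the averages.
-/

open Filter MeasureTheory Set Real intervalIntegral

theorem IsPreconnected.pos_or_neg_of_ne_zero {X : Type*} [TopologicalSpace X] {s : Set X}
    {f : X → ℝ} (hs : IsPreconnected s) (hf : ContinuousOn f s) (h0 : ∀ x ∈ s, f x ≠ 0) :
    (∀ x ∈ s, 0 < f x) ∨ (∀ x ∈ s, f x < 0) := by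
  by_contra! h
  obtain ⟨⟨x, hx, hfx⟩, ⟨y, hy, hfy⟩⟩ := h
  obtain ⟨z, hz, hfz⟩ := hs.intermediate_value hx hy hf ⟨hfx, hfy⟩
  exact h0 z hz hfz

theorem abs_integral_eq_integral_abs_of_ne_zero {f : ℝ → ℝ} {a b : ℝ} (hab : a ≤ b)
    (hf : ContinuousOn f (Icc a b)) (h0 : ∀ x ∈ Icc a b, f x ≠ 0) :
    |∫ x in a..b, f x| = ∫ x in a..b, |f x| := by
  rcases isPreconnected_Icc.pos_or_neg_of_ne_zero hf h0 with hpos | hneg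
  · rw [abs_of_nonneg (integral_nonneg hab fun x hx => (hpos x hx).le)]
    refine integral_congr fun x hx => (abs_of_pos (hpos x ?_)).symm
    rwa [uIcc_of_le hab] at hx
  · have hnonneg : 0 ≤ ∫ x in a..b, -f x :=
      integral_nonneg hab fun x hx => (neg_pos.2 (hneg x hx)).le
    rw [intervalIntegral.integral_neg, neg_nonneg] at hnonneg
    rw [abs_of_nonpos hnonneg, ← intervalIntegral.integral_neg]
    refine integral_congr fun x hx => (abs_of_neg (hneg x ?_)).symm
    rwa [uIcc_of_le hab] at hx

theorem mul_log_div_le_integral {f : ℝ → ℝ} {B X ε : ℝ} (hB : 0 < B) (hBX : B ≤ X)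
    (hf : IntervalIntegrable f volume B X) (h : ∀ t ∈ Icc B X, ε / t ≤ f t) :
    ε * log (X / B) ≤ ∫ t in B..X, f t := by
  have h0 : ∀ t ∈ uIcc B X, t ≠ 0 := by
    rw [uIcc_of_le hBX]
    exact fun t ht => (hB.trans_le ht.1).ne'
  calc ε * log (X / B) = ∫ t in B..X, ε * (1 / t) := by
        rw [intervalIntegral.integral_const_mul, integral_one_div fun h => h0 0 h rfl]
    _ ≤ ∫ t in B..X, f t := by
        refine integral_mono_on hBX ?_ hf fun t ht => by rw [mul_one_div]; exact h t ht
        exact (intervalIntegrable_one_div h0 continuousOn_id).const_mul ε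

theorem exists_ge_mul_abs_lt_of_abs_integral_le {G : ℝ → ℝ} {B C ε : ℝ} (hB : 0 < B)
    (hG : ContinuousOn G (Ici B)) (hC : ∀ X, B ≤ X → |∫ t in B..X, G t| ≤ C) (hε : 0 < ε) :
    ∃ T, B ≤ T ∧ T * |G T| < ε := by
  by_contra! h
  have hC0 : 0 ≤ C := by simpa using hC B le_rfl
  set X := B * exp ((C + 1) / ε)
  have hBX : B ≤ X := le_mul_of_one_le_right hB.le (one_le_exp (by positivity))
  have hGX : ContinuousOn G (Icc B X) := hG.mono Icc_subset_Ici_self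
  have hlog : ε * log (X / B) = C + 1 := by
    rw [mul_div_cancel_left₀ _ hB.ne', log_exp]
    field_simp
  have hlower : ε * log (X / B) ≤ ∫ t in B..X, |G t| := by
    refine mul_log_div_le_integral hB hBX (hGX.abs.intervalIntegrable_of_Icc hBX) fun t ht => ?_
    rw [div_le_iff₀ (hB.trans_le ht.1), mul_comm]
    exact h t ht.1
  have hne : ∀ t ∈ Icc B X, G t ≠ 0 := fun t ht hGt => by
    simpa [hGt] using (hε.trans_le (h t ht.1))
  rw [← abs_integral_eq_integral_abs_of_ne_zero hBX hGX hne, hlog] at hlower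
  linarith [hC X hBX]

theorem integral_comp_add_right_sub {E : Type*} [NormedAddCommGroup E] [NormedSpace ℝ E]
    {f : ℝ → E} {a b A : ℝ} (hab : a ≤ b) (hA : 0 ≤ A) (hf : ContinuousOn f (Icc a (b + A))) :
    ∫ t in a..b, (f (t + A) - f t) = (∫ t in b..b + A, f t) - ∫ t in a..a + A, f t := by
  have hint : ∀ x ∈ Icc a (b + A), ∀ y ∈ Icc a (b + A), IntervalIntegrable f volume x y :=
    fun x hx y hy => (hf.mono (uIcc_subset_Icc hx hy)).intervalIntegrable
  have ha : a ∈ Icc a (b + A) := ⟨le_rfl, by linarith⟩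
  have hb : b ∈ Icc a (b + A) := ⟨hab, by linarith⟩
  have haA : a + A ∈ Icc a (b + A) := ⟨by linarith, by linarith⟩
  have hbA : b + A ∈ Icc a (b + A) := ⟨by linarith, le_rfl⟩
  have hshift : IntervalIntegrable (fun t => f (t + A)) volume a b := by
    simpa using (hint _ haA _ hbA).comp_add_right A
  rw [integral_sub hshift (hint _ ha _ hb), integral_comp_add_right,
    integral_interval_sub_interval_comm' (hint _ haA _ hbA) (hint _ ha _ hb) (hint _ haA _ ha)]

theorem frequently_mul_abs_sub_lt {H : ℝ → ℝ} {M A ε : ℝ} (hH : ContinuousOn H (Ioi 0))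
    (hbdd : ∀ t, 0 < t → |H t| ≤ M) (hA : 0 ≤ A) (hε : 0 < ε) :
    ∃ᶠ T in atTop, T * |H (T + A) - H T| < ε := by
  rw [frequently_atTop]
  intro a
  have hB : 0 < max a 1 := lt_max_of_lt_right one_pos
  have hwindow : ∀ X, 0 < X → |∫ t in X..X + A, H t| ≤ M * A := fun X hX => by
    have := norm_integral_le_of_norm_le_const (a := X) (b := X + A) (C := M) (f := H)
      fun t ht => by
        rw [uIoc_of_le (by linarith)] at ht
        exact hbdd t (hX.trans ht.1)
    simpa [abs_of_nonneg hA] using this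
  have hG : ContinuousOn (fun t => H (t + A) - H t) (Ici (max a 1)) := by
    refine (hH.comp (continuousOn_id.add continuousOn_const) fun t ht => ?_).sub
      (hH.mono fun t ht => hB.trans_le ht)
    exact add_pos_of_pos_of_nonneg (hB.trans_le ht) hA
  have hbound : ∀ X, max a 1 ≤ X → |∫ t in max a 1..X, (H (t + A) - H t)| ≤ M * A + M * A := by
    intro X hX
    rw [integral_comp_add_right_sub hX hA (hH.mono fun t ht => hB.trans_le ht.1)]
    exact (abs_sub _ _).trans (add_le_add (hwindow X (hB.trans_le hX)) (hwindow _ hB))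
  obtain ⟨T, hT, hsmall⟩ := exists_ge_mul_abs_lt_of_abs_integral_le hB hG hbound hε
  exact ⟨T, (le_max_left _ _).trans hT, hsmall⟩

theorem abs_integral_mul_deriv_le {H H' : ℝ → ℝ} {T A δ : ℝ} (hA : 0 ≤ A)
    (hderiv : ∀ t ∈ Icc T (T + A), HasDerivAt H (H' t) t) (hcont : ContinuousOn H' (Icc T (T + A)))
    (hδ : ∀ t ∈ Icc T (T + A), |H' t| ≤ δ) :
    |∫ t in T..T + A, t * H' t| ≤ A ^ 2 * δ + |T| * |H (T + A) - H T| := by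
  have hTA : T ≤ T + A := by linarith
  have hint : IntervalIntegrable H' volume T (T + A) := hcont.intervalIntegrable_of_Icc hTA
  have hftc : ∫ t in T..T + A, H' t = H (T + A) - H T :=
    integral_eq_sub_of_hasDerivAt (by rwa [uIcc_of_le hTA]) hint
  have hrem_int : IntervalIntegrable (fun t => (t - T) * H' t) volume T (T + A) :=
    ((continuousOn_id.sub continuousOn_const).mul hcont).intervalIntegrable_of_Icc hTA
  have hsplit : ∫ t in T..T + A, t * H' t
      = (∫ t in T..T + A, (t - T) * H' t) + T * (H (T + A) - H T) := by
    rw [← hftc, ← intervalIntegral.integral_const_mul, ← integral_add hrem_int (hint.const_mul T)]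
    exact integral_congr fun t _ => by ring
  have hrem : |∫ t in T..T + A, (t - T) * H' t| ≤ A ^ 2 * δ := by
    have := norm_integral_le_of_norm_le_const (a := T) (b := T + A) (C := A * δ)
      (f := fun t => (t - T) * H' t) fun t ht => by
        rw [uIoc_of_le hTA] at ht
        rw [Real.norm_eq_abs, abs_mul, abs_of_pos (sub_pos.2 ht.1)]
        exact mul_le_mul (by linarith [ht.2]) (hδ t (Ioc_subset_Icc_self ht)) (abs_nonneg _) hA
    simpa [abs_of_nonneg hA, sq, mul_comm, mul_left_comm] using this
  rw [hsplit]
  refine (abs_add_le _ _).trans ?_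
  rw [abs_mul]
  linarith

/-- Lemma 8.15 of Enss / Lemma `tdHdt`.
If `H : (0,∞) → ℝ` is bounded, continuously differentiable with `H'(t) → 0` as `t → ∞`,
then for every `0 < A < ∞` there is a sequence `T_k → ∞` such that
`(1/A) ∫_{T_k}^{T_k+A} t H'(t) dt → 0`. -/
theorem tdHdt (H H' : ℝ → ℝ) (M : ℝ)
    (hderiv : ∀ t : ℝ, 0 < t → HasDerivAt H (H' t) t)
    (hcont : ContinuousOn H' (Set.Ioi 0))
    (hbdd : ∀ t : ℝ, 0 < t → |H t| ≤ M)
    (hlim : Tendsto H' atTop (nhds 0))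
    (A : ℝ) (hA : 0 < A) :
    ∃ T : ℕ → ℝ, Tendsto T atTop atTop ∧
      Tendsto (fun k => (1 / A) * ∫ t in (T k)..(T k + A), t * H' t) atTop (nhds 0) := by
  suffices MapClusterPt 0 atTop fun T => (1 / A) * ∫ t in T..T + A, t * H' t by
    obtain ⟨T, hlimT, hT⟩ := this.exists_seq_tendsto
    exact ⟨T, hT, hlimT⟩
  rw [Metric.nhds_basis_ball.mapClusterPt_iff_frequently]
  intro ε hε
  have hH : ContinuousOn H (Ioi 0) := fun t ht => (hderiv t ht).continuousAt.continuousWithinAt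
  have hH'small : ∀ᶠ T in atTop, ∀ t, T ≤ t → |H' t| ≤ ε / (2 * A) := by
    refine eventually_forall_ge_atTop.2 ?_
    filter_upwards [Metric.tendsto_nhds.1 hlim (ε / (2 * A)) (by positivity)] with t ht
    simpa using ht.le
  refine ((frequently_mul_abs_sub_lt hH hbdd hA.le (ε := ε * A / 2) (by positivity)).and_eventually
    (hH'small.and (eventually_gt_atTop 0))).mono ?_
  rintro T ⟨hG, hH'T, hT⟩
  have hest := abs_integral_mul_deriv_le hA.le (fun t ht => hderiv t (hT.trans_le ht.1))
    (hcont.mono fun t ht => hT.trans_le ht.1) fun t ht => hH'T t ht.1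
  have hA2 : A ^ 2 * (ε / (2 * A)) = ε * A / 2 := by field_simp
  rw [mem_ball_zero_iff, Real.norm_eq_abs, abs_mul, abs_of_pos (one_div_pos.2 hA),
    one_div_mul_eq_div, div_lt_iff₀ hA]
  rw [abs_of_pos hT] at hest
  linarith
end

section
/- Let H be a self-adjoint operator on a Hilbert space and let φ be a vector in the continuous spectral subspace of H. Then (1/T) ∫_{-T}^{T} |⟨e^{-itH}φ, φ⟩|² dt → 0 as T → ∞. -/
/-!
Writing `⟨e^{-itH}φ, φ⟩ = ∫ e^{-itλ} dμ(λ)`, the square of its modulus is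
`∬ cos (t (λ - λ')) dμ(λ) dμ(λ')`, so by Fubini the time average over `[-T, T]` is the
`μ ⊗ μ`-integral of `2 sin (T (λ - λ')) / (T (λ - λ'))`. This kernel is bounded by `2` and tends
to `0` off the diagonal `λ = λ'`, which is `μ ⊗ μ`-null because `μ` has no atoms; dominated
convergence concludes.
-/

open Filter MeasureTheory
open scoped Topology ComplexConjugate

lemma sq_norm_integral_eq_integral_re_mul_conj {α : Type*} [MeasurableSpace α] {μ : Measure α}
    [SFinite μ] {f : α → ℂ} (hf : Integrable f μ) :
    ‖∫ x, f x ∂μ‖ ^ 2 = ∫ p : α × α, (f p.1 * conj (f p.2)).re ∂μ.prod μ := by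
  have hconj : Integrable (fun x => conj (f x)) μ :=
    Complex.conjCLE.toContinuousLinearMap.integrable_comp hf
  calc ‖∫ x, f x ∂μ‖ ^ 2 = ((∫ x, f x ∂μ) * conj (∫ x, f x ∂μ)).re := by
        rw [Complex.mul_conj, Complex.normSq_eq_norm_sq, Complex.ofReal_re]
    _ = (∫ p : α × α, f p.1 * conj (f p.2) ∂μ.prod μ).re := by
        rw [← integral_conj, ← integral_prod_mul]
    _ = ∫ p : α × α, (f p.1 * conj (f p.2)).re ∂μ.prod μ :=
        (integral_re (hf.mul_prod hconj)).symm

lemma re_exp_mul_conj_exp (t x y : ℝ) :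
    (Complex.exp (-(Complex.I * t * x)) * conj (Complex.exp (-(Complex.I * t * y)))).re
      = Real.cos (t * (x - y)) := by
  rw [← Complex.exp_conj, ← Complex.exp_add]
  have hexp : -(Complex.I * t * x) + conj (-(Complex.I * t * y))
      = ↑(-(t * (x - y))) * Complex.I := by
    simp only [map_neg, map_mul, Complex.conj_I, Complex.conj_ofReal]
    push_cast
    ring
  rw [hexp, Complex.exp_ofReal_mul_I_re, Real.cos_neg]

lemma integrable_exp_neg_I_mul (μ : Measure ℝ) [IsFiniteMeasure μ] (t : ℝ) :
    Integrable (fun l : ℝ => Complex.exp (-(Complex.I * t * l))) μ :=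
  Integrable.of_bound (by fun_prop) 1 <| Eventually.of_forall fun l => by simp [Complex.norm_exp]

lemma ae_fst_ne_snd {α : Type*} [MeasurableSpace α] [MeasurableEq α]
    (μ ν : Measure α) [SFinite ν] [NullSingletonClass ν] : ∀ᵐ p ∂μ.prod ν, p.1 ≠ p.2 := by
  have hoff : MeasurableSet {p : α × α | p.1 = p.2}ᶜ :=
    (measurableSet_eq_fun measurable_fst measurable_snd).compl
  exact (Measure.ae_prod_mem_iff_ae_ae_mem hoff).2 <|
    Eventually.of_forall fun x => (ν.ae_ne x).mono fun _ => Ne.symm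

noncomputable def cosAverage (T s : ℝ) : ℝ := 1 / T * ∫ t in (-T)..T, Real.cos (t * s)

lemma continuous_cosAverage (T : ℝ) : Continuous (cosAverage T) :=
  continuous_const.mul (intervalIntegral.continuous_parametric_intervalIntegral_of_continuous'
    (by fun_prop) _ _)

lemma abs_cosAverage_le_two {T : ℝ} (hT : 0 < T) (s : ℝ) : |cosAverage T s| ≤ 2 := by
  have hint : ‖∫ t in (-T)..T, Real.cos (t * s)‖ ≤ 1 * |T - -T| :=
    intervalIntegral.norm_integral_le_of_norm_le_const fun t _ => Real.abs_cos_le_one _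
  rw [Real.norm_eq_abs, abs_of_pos (by linarith : 0 < T - -T)] at hint
  rw [cosAverage, abs_mul, abs_of_pos (one_div_pos.2 hT)]
  calc 1 / T * |∫ t in (-T)..T, Real.cos (t * s)| ≤ 1 / T * (1 * (T - -T)) := by gcongr
    _ = 2 := by field_simp; ring

lemma cosAverage_of_ne_zero {s : ℝ} (hs : s ≠ 0) (T : ℝ) :
    cosAverage T s = 2 * Real.sin (T * s) / (T * s) := by
  rw [cosAverage, intervalIntegral.integral_comp_mul_right Real.cos hs, integral_cos, neg_mul,
    Real.sin_neg, smul_eq_mul]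
  ring

lemma tendsto_cosAverage_atTop {s : ℝ} (hs : s ≠ 0) :
    Tendsto (fun T => cosAverage T s) atTop (𝓝 0) := by
  have hbound (T : ℝ) : ‖cosAverage T s‖ ≤ 2 / |s| * |T|⁻¹ :=
    calc ‖cosAverage T s‖ = 2 * |Real.sin (T * s)| / (|T| * |s|) := by
          rw [cosAverage_of_ne_zero hs, Real.norm_eq_abs, abs_div, abs_mul, abs_mul, abs_two]
      _ ≤ 2 * 1 / (|T| * |s|) := by gcongr; exact Real.abs_sin_le_one _
      _ = 2 / |s| * |T|⁻¹ := by ring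
  refine squeeze_zero_norm hbound ?_
  simpa using (tendsto_inv_atTop_zero.comp tendsto_abs_atTop_atTop).const_mul (2 / |s|)

section CosAverageIntegral

variable {X : Type*} [MeasurableSpace X] (ν : Measure X) [IsFiniteMeasure ν] {g : X → ℝ}

lemma integral_cosAverage_eq (hg : Measurable g) {T : ℝ} (hT : 0 ≤ T) :
    1 / T * ∫ t in (-T)..T, ∫ x, Real.cos (t * g x) ∂ν = ∫ x, cosAverage T (g x) ∂ν := by
  have hTT : -T ≤ T := by linarith
  have hint : Integrable (Function.uncurry fun t x => Real.cos (t * g x))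
      ((volume.restrict (Set.Ioc (-T) T)).prod ν) :=
    Integrable.of_bound (by fun_prop) 1 <|
      Eventually.of_forall fun _ => Real.abs_cos_le_one _
  simp only [cosAverage, intervalIntegral.integral_of_le hTT]
  rw [integral_integral_swap hint, integral_const_mul]

lemma tendsto_integral_cosAverage_atTop (hg : Measurable g) (hg0 : ∀ᵐ x ∂ν, g x ≠ 0) :
    Tendsto (fun T => ∫ x, cosAverage T (g x) ∂ν) atTop (𝓝 0) := by
  simpa using tendsto_integral_filter_of_dominated_convergence (fun _ => 2)
    (Eventually.of_forall fun T =>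
      ((continuous_cosAverage T).measurable.comp hg).aestronglyMeasurable)
    ((eventually_gt_atTop 0).mono fun T hT => Eventually.of_forall fun x =>
      abs_cosAverage_le_two hT (g x))
    (integrable_const 2) (hg0.mono fun x hx => tendsto_cosAverage_atTop hx)

end CosAverageIntegral

/-- Wiener step of the RAGE theorem.
If `U t = e^{-itH}` is the unitary group of a self-adjoint operator `H` and `φ` lies in the
continuous spectral subspace of `H` — i.e. the scalar spectral measure `μ` of `φ`, which
represents `⟨e^{-itH}φ, φ⟩ = ∫ e^{-itλ} dμ(λ)`, has no atoms — then
`(1/T) ∫_{-T}^{T} |⟨e^{-itH}φ, φ⟩|² dt → 0` as `T → ∞`. -/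
theorem wiener_rage {ℋ : Type*} [NormedAddCommGroup ℋ] [InnerProductSpace ℂ ℋ]
    (U : ℝ → ℋ →L[ℂ] ℋ) (φ : ℋ) (μ : Measure ℝ)
    [IsFiniteMeasure μ] [NullSingletonClass μ]
    (hspec : ∀ t : ℝ,
      (inner ℂ (U t φ) φ : ℂ) = ∫ l, Complex.exp (-(Complex.I * t * l)) ∂μ) :
    Tendsto (fun T : ℝ => (1 / T) * ∫ t in (-T)..T, ‖(inner ℂ (U t φ) φ : ℂ)‖ ^ 2)
      atTop (nhds 0) := by
  have hsq (t : ℝ) :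
      ‖(inner ℂ (U t φ) φ : ℂ)‖ ^ 2 = ∫ p : ℝ × ℝ, Real.cos (t * (p.1 - p.2)) ∂μ.prod μ := by
    rw [hspec, sq_norm_integral_eq_integral_re_mul_conj (integrable_exp_neg_I_mul μ t)]
    simp only [re_exp_mul_conj_exp]
  have hmeas : Measurable fun p : ℝ × ℝ => p.1 - p.2 := by fun_prop
  have hoff_diag : ∀ᵐ p ∂μ.prod μ, p.1 - p.2 ≠ 0 :=
    (ae_fst_ne_snd μ μ).mono fun _ => sub_ne_zero.2
  simp only [hsq]
  refine (tendsto_integral_cosAverage_atTop (μ.prod μ) hmeas hoff_diag).congr' ?_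
  filter_upwards [eventually_ge_atTop 0] with T hT
  exact (integral_cosAverage_eq (μ.prod μ) hmeas hT).symm
end

section
/- Let μ be a finite positive Borel measure on ℝ with no atoms. Then the double integral ∫∫ sin((λ−λ')T)/((λ−λ')T) dμ(λ) dμ(λ') tends to 0 as T → ∞ (where the integrand is interpreted as 1 when λ = λ'). -/
/-!
Dominated convergence: the integrand is bounded by `1` and, for `λ ≠ λ'`, tends to `0` as
`T → ∞`; the diagonal `λ = λ'` is `μ ⊗ μ`-null because `μ` has no atoms.
-/

open Filter MeasureTheory Bornology Topology

lemma Real.tendsto_sinc_cobounded : Tendsto sinc (cobounded ℝ) (𝓝 0) := by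
  refine squeeze_zero_norm' ?_ tendsto_norm_cobounded_atTop.inv_tendsto_atTop
  filter_upwards [eventually_ne_cobounded 0] with x hx
  rw [Real.sinc_of_ne_zero hx, norm_div, inv_eq_one_div]
  exact div_le_div_of_nonneg_right (Real.abs_sin_le_one x) (norm_nonneg x)

lemma tendsto_const_mul_atTop_cobounded {x : ℝ} (hx : x ≠ 0) :
    Tendsto (fun T : ℝ => x * T) atTop (cobounded ℝ) := by
  rw [← tendsto_norm_atTop_iff_cobounded]
  simpa only [norm_mul] using tendsto_norm_atTop_atTop.const_mul_atTop (norm_pos_iff.mpr hx)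

lemma MeasureTheory.Measure.prod_diagonal_eq_zero {α : Type*} [MeasurableSpace α] [MeasurableEq α]
    (μ ν : Measure α) [SFinite ν] [NullSingletonClass ν] : μ.prod ν (Set.diagonal α) = 0 := by
  rw [Measure.prod_apply measurableSet_diagonal]
  simp [Set.preimage, Set.diagonal]

lemma tendsto_integral_sinc_mul_atTop {α : Type*} [MeasurableSpace α] {μ : Measure α}
    [IsFiniteMeasure μ] {f : α → ℝ} (hf : Measurable f) (hf0 : ∀ᵐ a ∂μ, f a ≠ 0) :
    Tendsto (fun T => ∫ a, Real.sinc (f a * T) ∂μ) atTop (𝓝 0) := by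
  simpa using tendsto_integral_filter_of_dominated_convergence (fun _ => (1 : ℝ))
    (F := fun T a => Real.sinc (f a * T)) (f := 0)
    (.of_forall fun T => (Real.continuous_sinc.measurable.comp (hf.mul_const T)).aestronglyMeasurable)
    (.of_forall fun _ => .of_forall fun _ => Real.abs_sinc_le_one _) (integrable_const 1)
    (hf0.mono fun _ ha => Real.tendsto_sinc_cobounded.comp (tendsto_const_mul_atTop_cobounded ha))

/-- For a finite non-atomic positive Borel measure `μ` on `ℝ`,
`∫∫ sinc((λ−λ')T) dμ(λ) dμ(λ') → 0` as `T → ∞`, where `sinc x = sin x / x`, `sinc 0 = 1`. -/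
theorem double_sinc_tendsto_zero (μ : Measure ℝ) [IsFiniteMeasure μ] [NullSingletonClass μ] :
    Tendsto (fun T : ℝ =>
        ∫ l, ∫ l',
          (if (l - l') * T = 0 then (1 : ℝ)
            else Real.sin ((l - l') * T) / ((l - l') * T)) ∂μ ∂μ)
      atTop (nhds 0) := by
  have hint (T : ℝ) : Integrable (fun p : ℝ × ℝ => Real.sinc ((p.1 - p.2) * T)) (μ.prod μ) :=
    .of_bound (Real.continuous_sinc.measurable.comp
      ((measurable_fst.sub measurable_snd).mul_const T)).aestronglyMeasurable 1
      (.of_forall fun _ => Real.abs_sinc_le_one _)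
  have hoff : ∀ᵐ p ∂μ.prod μ, p.1 - p.2 ≠ 0 := by
    refine measure_mono_null (fun p hp => ?_) (μ.prod_diagonal_eq_zero μ)
    simpa [sub_eq_zero] using hp
  -- the integrand of the statement is `Real.sinc ((l - l') * T)` unfolded
  exact (tendsto_integral_sinc_mul_atTop (measurable_fst.sub measurable_snd) hoff).congr
    fun T => integral_prod _ (hint T)
end

section
/- Let 1 ≥ θ_1 > ρ_j > θ_j > ρ_N > θ_N > 0 satisfy θ_{j−1} ≥ θ_j + ρ_j for j = 2,…,N. Define, for each cluster decomposition a with 2 ≤ |a| ≤ N, the set T_a(ρ,θ) = (∩_{k=1}^{k_a} { x : |z_{ak}|² > ρ|x|² }) ∩ { x : |x_a|² > (1−θ)|x|² }. Then every x with |x|² ≥ 1 belongs to T_a(ρ_{|a|}, θ_{|a|}) for some cluster decomposition a with 2 ≤ |a| ≤ N. -/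
/-- (covering part 1) of Lemma 4.1 of the paper).
Cluster decompositions of an `N`-body system are modelled abstractly: `A` is the collection of
cluster decompositions, `size a = |a|`, `Pairs a` indexes the intercluster vectors
`z_{a1}, …, z_{a k_a}` of `a`, and `merge a p` is the cluster decomposition obtained by joining
the two clusters connected by the vector indexed by `p` (so `|merge a p| = |a| − 1`).
For a fixed configuration `x`, `nx = |x|`, `nxa a = |x_a|`, `nxua a = |x^a|`, `Z a p = |z_{ap}|`;
these satisfy `|x_a|² + |x^a|² = |x|²`, `|x^{merge c p}|² = |z_{cp}|² + |x^c|²`, `x^a = 0` for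
the finest decomposition (`|a| = N`), `x_a = 0` when `|a| = 1`, and `x_a = z_{a1}` when `|a| = 2`.
Given constants `1 ≥ θ₁ > ρ_j > θ_j > ρ_N > θ_N > 0` with `θ_{j−1} ≥ θ_j + ρ_j` (`j = 2,…,N`),
every `x` with `|x|² ≥ 1` lies in `T_a(ρ_{|a|}, θ_{|a|})` for some `a` with `2 ≤ |a| ≤ N`, where
`T_a(ρ,θ) = (∩_k {|z_{ak}|² > ρ|x|²}) ∩ {|x_a|² > (1−θ)|x|²}`. -/
theorem covering_lemma
    (N : ℕ) (hN : 2 ≤ N)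
    (A : Type) (size : A → ℕ)
    (Pairs : A → Type)
    (merge : (a : A) → Pairs a → A)
    (hsize : ∀ a : A, 1 ≤ size a ∧ size a ≤ N)
    (hmerge_size : ∀ (a : A) (p : Pairs a), size (merge a p) = size a - 1)
    (top : A) (htop : size top = N)
    (nx : ℝ) (nxa nxua : A → ℝ) (Z : (a : A) → Pairs a → ℝ)
    (hnx : 0 ≤ nx) (hnxa : ∀ a, 0 ≤ nxa a) (hnxua : ∀ a, 0 ≤ nxua a)
    (hZ : ∀ (a : A) (p : Pairs a), 0 ≤ Z a p)
    (hpyth : ∀ a : A, nxa a ^ 2 + nxua a ^ 2 = nx ^ 2)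
    (hmerge_norm : ∀ (c : A) (p : Pairs c),
      nxua (merge c p) ^ 2 = Z c p ^ 2 + nxua c ^ 2)
    (htop_internal : nxua top = 0)
    (hsize_one : ∀ a : A, size a = 1 → nxa a = 0)
    (hsize_two : ∀ a : A, size a = 2 → ∀ p : Pairs a, nxa a = Z a p)
    (θ ρ : ℕ → ℝ)
    (hθ1 : θ 1 ≤ 1)
    (hchain1 : ∀ j, 2 ≤ j → j ≤ N → θ 1 > ρ j ∧ ρ j > θ j)
    (hchain2 : ∀ j, 2 ≤ j → j < N → θ j > ρ N)
    (hchain3 : ρ N > θ N) (hchain4 : θ N > 0)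
    (hstep : ∀ j, 2 ≤ j → j ≤ N → θ (j - 1) ≥ θ j + ρ j)
    (hx : 1 ≤ nx ^ 2) :
    ∃ a : A, 2 ≤ size a ∧ size a ≤ N ∧
      (∀ p : Pairs a, Z a p ^ 2 > ρ (size a) * nx ^ 2) ∧
      nxa a ^ 2 > (1 - θ (size a)) * nx ^ 2 := by

  have hnx2 : (0:ℝ) < nx ^ 2 := lt_of_lt_of_le one_pos hx
  have key : ∀ k, ∀ a : A, size a = k → k ≤ N → nxua a ^ 2 < θ k * nx ^ 2 →
      ∃ a : A, 2 ≤ size a ∧ size a ≤ N ∧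
        (∀ p : Pairs a, Z a p ^ 2 > ρ (size a) * nx ^ 2) ∧
        nxa a ^ 2 > (1 - θ (size a)) * nx ^ 2 := by
    intro k
    induction k using Nat.strong_induction_on with
    | _ k ih =>
      intro a hak hkN hinv
      have hk1 : 1 ≤ k := hak ▸ (hsize a).1
      rcases Nat.lt_or_ge k 2 with hk2 | hk2
      · interval_cases k
        have h0 := hsize_one a hak
        have hpy := hpyth a
        nlinarith
      · by_cases hall : ∀ p : Pairs a, Z a p ^ 2 > ρ k * nx ^ 2
        · refine ⟨a, hak ▸ hk2, hak ▸ hkN, by rw [hak]; exact hall, ?_⟩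
          have hpy := hpyth a
          rw [hak]
          nlinarith
        · push_neg at hall
          obtain ⟨p, hp⟩ := hall
          have hms := hmerge_size a p
          have hmn := hmerge_norm a p
          have hst := hstep k hk2 hkN
          apply ih (k-1) (by omega) (merge a p) (by omega) (by omega)
          nlinarith
  apply key N top htop le_rfl
  rw [htop_internal]
  nlinarith
end

section
/- Let V : ℝ^ν → ℝ satisfy |∂^α V(x)| ≤ C_α ⟨x⟩^{−δ−|α|} for all multi-indices α and some δ ∈ (0,1). Let χ_0 ∈ C^∞(ℝ^ν) with 0 ≤ χ_0 ≤ 1, χ_0(x) = 1 for |x| ≥ 2, χ_0(x) = 0 for |x| ≤ 1, and for ρ ∈ (0,1) define W_ρ(t,x) = V(x) χ_0(ρx) χ_0(⟨log⟨t⟩⟩ x / ⟨t⟩). Then for any multi-index α and any real numbers ℓ, m ≥ 0 and 0 < δ_0 < δ with δ_0 + ℓ + m < |α| + δ, there is a constant C_α > 0, independent of t, x, ρ, such that |∂_x^α W_ρ(t,x)| ≤ C_α ρ^{δ_0} ⟨t⟩^{−ℓ} ⟨x⟩^{−m}. -/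
open Real Filter

section helpers

variable {E : Type*} [NormedAddCommGroup E] [NormedSpace ℝ E]

lemma one_le_jap (r : ℝ) : 1 ≤ Real.sqrt (1 + r ^ 2) := by
  have := Real.sqrt_le_sqrt (show (1:ℝ) ≤ 1 + r ^ 2 by nlinarith [sq_nonneg r])
  rwa [Real.sqrt_one] at this

lemma le_jap (r : ℝ) (hr : 0 ≤ r) : r ≤ Real.sqrt (1 + r ^ 2) := by
  have := Real.sqrt_le_sqrt (show r ^ 2 ≤ 1 + r ^ 2 by linarith)
  rwa [Real.sqrt_sq hr] at this

lemma iteratedFDeriv_congr_nhds {F : Type*} [NormedAddCommGroup F] [NormedSpace ℝ F]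
    {f g : E → F} {x : E} (h : f =ᶠ[nhds x] g) (n : ℕ) :
    iteratedFDeriv ℝ n f x = iteratedFDeriv ℝ n g x := by
  rw [← iteratedFDerivWithin_univ, ← iteratedFDerivWithin_univ]
  exact Filter.EventuallyEq.iteratedFDerivWithin_eq (by rwa [nhdsWithin_univ]) h.self_of_nhds n

lemma rpow_neg_le {a b p : ℝ} (hb : 0 < b) (hab : 1 / b ≤ a) (hp : 0 ≤ p) :
    a ^ (-p) ≤ b ^ p := by
  have ha : 0 < a := lt_of_lt_of_le (by positivity) hab
  have h1 : a ^ (-p) ≤ (1 / b) ^ (-p) :=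
    Real.rpow_le_rpow_of_nonpos (by positivity) hab (neg_nonpos.mpr hp)
  refine h1.trans_eq ?_
  rw [one_div, Real.inv_rpow hb.le, Real.rpow_neg hb.le, inv_inv]

end helpers

section chi

variable {E : Type*} [NormedAddCommGroup E] [NormedSpace ℝ E]

/-- norm of const-one iterated derivative is ≤ 1 -/
lemma norm_iteratedFDeriv_one_le (k : ℕ) (y : E) :
    ‖iteratedFDeriv ℝ k (fun _ : E => (1:ℝ)) y‖ ≤ 1 := by
  rcases Nat.eq_zero_or_pos k with h0 | hk
  · subst h0; rw [norm_iteratedFDeriv_zero]; simp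
  · rw [iteratedFDeriv_const_of_ne (Nat.pos_iff_ne_zero.mp hk)]; simp

lemma chi_bound_k [ProperSpace E] (χ₀ : E → ℝ) (hχ : ContDiff ℝ (⊤ : ℕ∞) χ₀)
    (hχ1 : ∀ x : E, 2 ≤ ‖x‖ → χ₀ x = 1) (k : ℕ) :
    ∃ M : ℝ, 1 ≤ M ∧ ∀ y : E, ‖iteratedFDeriv ℝ k χ₀ y‖ ≤ M := by
  have hcont : Continuous (iteratedFDeriv ℝ k χ₀) :=
    hχ.continuous_iteratedFDeriv (by exact_mod_cast le_top)
  obtain ⟨C, hC⟩ := (isCompact_closedBall (0:E) 3).exists_bound_of_continuousOn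
    hcont.continuousOn
  refine ⟨max C 1, le_max_right _ _, fun y => ?_⟩
  by_cases hy : ‖y‖ ≤ 3
  · exact (hC y (mem_closedBall_zero_iff.mpr hy)).trans (le_max_left _ _)
  · have hev : χ₀ =ᶠ[nhds y] (fun _ => (1:ℝ)) := by
      have hopen : IsOpen {z : E | 2 < ‖z‖} := isOpen_lt continuous_const continuous_norm
      filter_upwards [hopen.mem_nhds (show 2 < ‖y‖ by linarith)] with z hz
      exact hχ1 z hz.le
    rw [iteratedFDeriv_congr_nhds hev]
    exact (norm_iteratedFDeriv_one_le k y).trans (le_max_right _ _)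

lemma chi_bound [ProperSpace E] (χ₀ : E → ℝ) (hχ : ContDiff ℝ (⊤ : ℕ∞) χ₀)
    (hχ1 : ∀ x : E, 2 ≤ ‖x‖ → χ₀ x = 1) (n : ℕ) :
    ∃ M : ℝ, 1 ≤ M ∧ ∀ k ≤ n, ∀ y : E, ‖iteratedFDeriv ℝ k χ₀ y‖ ≤ M := by
  induction n with
  | zero =>
    obtain ⟨M, hM1, hM⟩ := chi_bound_k χ₀ hχ hχ1 0
    exact ⟨M, hM1, fun k hk y => by rw [Nat.le_zero.mp hk]; exact hM y⟩
  | succ n ih =>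
    obtain ⟨M, hM1, hM⟩ := ih
    obtain ⟨M', hM'1, hM'⟩ := chi_bound_k χ₀ hχ hχ1 (n+1)
    refine ⟨max M M', hM1.trans (le_max_left _ _), fun k hk y => ?_⟩
    rcases Nat.lt_succ_iff_lt_or_eq.mp (Nat.lt_succ_of_le hk) with h | h
    · exact (hM k (Nat.lt_succ_iff.mp h) y).trans (le_max_left _ _)
    · rw [h]; exact (hM' y).trans (le_max_right _ _)

set_option maxHeartbeats 1000000 in
/-- scaling bound -/
lemma scale_bound {F : Type*} [NormedAddCommGroup F] [NormedSpace ℝ F]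
    (f : E → F) (hf : ContDiff ℝ (⊤ : ℕ∞) f) (c : ℝ) (k : ℕ) (x : E) :
    ‖iteratedFDeriv ℝ k (fun y => f (c • y)) x‖ ≤
      ‖iteratedFDeriv ℝ k f (c • x)‖ * |c| ^ k := by
  have hfc : (fun y => f (c • y)) = f ∘ (c • ContinuousLinearMap.id ℝ E) := by
    funext y; simp
  rw [hfc, ContinuousLinearMap.iteratedFDeriv_comp_right _ hf x (by exact_mod_cast le_top)]
  refine (ContinuousMultilinearMap.norm_compContinuousLinearMap_le _ _).trans ?_
  have hle : ‖c • ContinuousLinearMap.id ℝ E‖ ≤ |c| := by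
    calc ‖c • ContinuousLinearMap.id ℝ E‖ ≤ ‖c‖ * ‖ContinuousLinearMap.id ℝ E‖ :=
          ContinuousLinearMap.opNorm_smul_le _ _
      _ ≤ |c| * 1 := by
          rw [Real.norm_eq_abs]; gcongr; exact ContinuousLinearMap.norm_id_le
      _ = |c| := mul_one _
  calc ‖iteratedFDeriv ℝ k f (c • x)‖ * ∏ _i : Fin k, ‖c • ContinuousLinearMap.id ℝ E‖
      = ‖iteratedFDeriv ℝ k f (c • x)‖ * ‖c • ContinuousLinearMap.id ℝ E‖ ^ k := by
        rw [Finset.prod_const, Finset.card_univ, Fintype.card_fin]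
    _ ≤ ‖iteratedFDeriv ℝ k f (c • x)‖ * |c| ^ k := by
        gcongr

end chi

section logs

lemma jap_log_le (s : ℝ) (hs : 1 ≤ s) : Real.sqrt (1 + Real.log s ^ 2) ≤ s := by
  have hl0 : 0 ≤ Real.log s := Real.log_nonneg hs
  have hl : Real.log s ≤ s - 1 := by
    have := Real.log_le_sub_one_of_pos (show (0:ℝ) < s by linarith); linarith
  have h2 : 1 + Real.log s ^ 2 ≤ s ^ 2 := by nlinarith
  calc Real.sqrt (1 + Real.log s ^ 2) ≤ Real.sqrt (s ^ 2) := Real.sqrt_le_sqrt h2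
    _ = s := Real.sqrt_sq (by linarith)

lemma log_growth (p ε : ℝ) (hp : 0 ≤ p) (hε : 0 < ε) :
    ∃ B : ℝ, 1 ≤ B ∧ ∀ s : ℝ, 1 ≤ s →
      Real.sqrt (1 + Real.log s ^ 2) ^ p ≤ B * s ^ ε := by
  rcases eq_or_lt_of_le hp with hp0 | hp0
  · refine ⟨1, le_refl _, fun s hs => ?_⟩
    rw [← hp0, Real.rpow_zero, one_mul]
    exact Real.one_le_rpow hs hε.le
  · set q := ε / p with hq
    have hq0 : 0 < q := div_pos hε hp0
    refine ⟨(1 + 1/q) ^ p, Real.one_le_rpow (by nlinarith [one_div_pos.mpr hq0]) hp,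
      fun s hs => ?_⟩
    have hs0 : 0 < s := by linarith
    have hl0 : 0 ≤ Real.log s := Real.log_nonneg hs
    have hL : Real.sqrt (1 + Real.log s ^ 2) ≤ 1 + Real.log s := by
      have h1 : 1 + Real.log s ^ 2 ≤ (1 + Real.log s) ^ 2 := by nlinarith
      calc Real.sqrt (1 + Real.log s ^ 2) ≤ Real.sqrt ((1 + Real.log s) ^ 2) :=
            Real.sqrt_le_sqrt h1
        _ = 1 + Real.log s := Real.sqrt_sq (by linarith)
    have hsq0 : 0 < s ^ q := Real.rpow_pos_of_pos hs0 q
    have hlog : Real.log s * q ≤ s ^ q := by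
      have h1 : Real.log (s ^ q) ≤ s ^ q - 1 :=
        Real.log_le_sub_one_of_pos hsq0
      rw [Real.log_rpow hs0] at h1
      nlinarith
    have hsq1 : (1:ℝ) ≤ s ^ q := Real.one_le_rpow hs hq0.le
    have h2 : 1 + Real.log s ≤ (1 + 1/q) * s ^ q := by
      have : Real.log s ≤ (1/q) * s ^ q := by
        rw [div_mul_eq_mul_div, le_div_iff₀ hq0]; linarith [hlog]
      nlinarith
    have h3 : Real.sqrt (1 + Real.log s ^ 2) ^ p ≤ ((1 + 1/q) * s ^ q) ^ p :=
      Real.rpow_le_rpow (Real.sqrt_nonneg _) (hL.trans h2) hp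
    rwa [Real.mul_rpow (by positivity) hsq0.le, ← Real.rpow_mul hs0.le,
      div_mul_cancel₀ ε (ne_of_gt hp0)] at h3

end logs

set_option maxHeartbeats 2000000 in
/-- estimate (6.3)/(5.6) for the time-dependent truncated potential.
Let `V` satisfy `|∂^α V(x)| ≤ C_α ⟨x⟩^{−δ−|α|}` (expressed via iterated Fréchet derivatives),
let `χ₀` be a smooth cutoff vanishing for `|x| ≤ 1` and equal to `1` for `|x| ≥ 2`, and set
`W_ρ(t,x) = V(x) χ₀(ρx) χ₀(⟨log⟨t⟩⟩ x / ⟨t⟩)`.  Then for every `n` and `ℓ, m ≥ 0`,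
`0 < δ₀ < δ` with `δ₀ + ℓ + m < n + δ`, there is `C > 0` independent of `t, x, ρ` with
`|∂_x^n W_ρ(t,x)| ≤ C ρ^{δ₀} ⟨t⟩^{−ℓ} ⟨x⟩^{−m}`. -/
theorem truncated_potential_decay {ν : ℕ}
    (V : EuclideanSpace ℝ (Fin ν) → ℝ) (δ : ℝ) (hδ0 : 0 < δ) (hδ1 : δ < 1)
    (CV : ℕ → ℝ)
    (hVsmooth : ContDiff ℝ (⊤ : ℕ∞) V)
    (hVbound : ∀ (n : ℕ) (x : EuclideanSpace ℝ (Fin ν)),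
      ‖iteratedFDeriv ℝ n V x‖ ≤ CV n * Real.sqrt (1 + ‖x‖ ^ 2) ^ (-(δ + (n : ℝ))))
    (χ₀ : EuclideanSpace ℝ (Fin ν) → ℝ) (hχsmooth : ContDiff ℝ (⊤ : ℕ∞) χ₀)
    (hχ01 : ∀ x, 0 ≤ χ₀ x ∧ χ₀ x ≤ 1)
    (hχ1 : ∀ x, 2 ≤ ‖x‖ → χ₀ x = 1) (hχ0 : ∀ x, ‖x‖ ≤ 1 → χ₀ x = 0)
    (n : ℕ) (ℓ m δ₀ : ℝ) (hℓ : 0 ≤ ℓ) (hm : 0 ≤ m) (hδ₀ : 0 < δ₀) (hδ₀δ : δ₀ < δ)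
    (hsum : δ₀ + ℓ + m < (n : ℝ) + δ) :
    ∃ C : ℝ, 0 < C ∧ ∀ ρ : ℝ, 0 < ρ → ρ < 1 → ∀ (t : ℝ) (x : EuclideanSpace ℝ (Fin ν)),
      ‖iteratedFDeriv ℝ n
          (fun y => V y * χ₀ (ρ • y) *
            χ₀ ((Real.sqrt (1 + Real.log (Real.sqrt (1 + t ^ 2)) ^ 2) /
                  Real.sqrt (1 + t ^ 2)) • y)) x‖ ≤
        C * ρ ^ δ₀ * Real.sqrt (1 + t ^ 2) ^ (-ℓ) *
          Real.sqrt (1 + ‖x‖ ^ 2) ^ (-m) := by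
  classical
  set ε : ℝ := (n : ℝ) + δ - δ₀ - ℓ - m with hε_def
  have hε : 0 < ε := by rw [hε_def]; linarith
  obtain ⟨M, hM1, hM⟩ := chi_bound χ₀ hχsmooth hχ1 n
  have hM0 : 0 < M := lt_of_lt_of_le one_pos hM1
  obtain ⟨B, hB1, hB⟩ := log_growth (ℓ + ε) ε (by linarith) hε
  have hB0 : 0 < B := lt_of_lt_of_le one_pos hB1
  have h2s2 : (1:ℝ) ≤ 2 * Real.sqrt 2 := by
    have h2 : (1:ℝ) ≤ Real.sqrt 2 := by
      rw [show (1:ℝ) = Real.sqrt 1 by simp]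
      exact Real.sqrt_le_sqrt one_le_two
    nlinarith
  set K : ℝ := ∑ i ∈ Finset.range (n+1), ∑ j ∈ Finset.range (i+1),
      (n.choose i : ℝ) * (i.choose j) * (max (CV j) 1) *
        (M * M * (2 * Real.sqrt 2) ^ n) with hK_def
  have hK0 : 0 ≤ K := Finset.sum_nonneg fun i _ => Finset.sum_nonneg fun j _ => by positivity
  refine ⟨(K + 1) * B, mul_pos (by linarith) hB0, fun ρ hρ0 hρ1 t x => ?_⟩
  set s : ℝ := Real.sqrt (1 + t ^ 2) with hs_def
  have hs1 : 1 ≤ s := one_le_jap t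
  have hs0 : 0 < s := lt_of_lt_of_le one_pos hs1
  set L : ℝ := Real.sqrt (1 + Real.log s ^ 2) with hL_def
  have hL1 : 1 ≤ L := one_le_jap _
  set c : ℝ := L / s with hc_def
  have hc0 : 0 < c := div_pos (by linarith) hs0
  have hc1 : c ≤ 1 := by
    rw [hc_def, div_le_one hs0]
    exact jap_log_le s hs1
  set jx : ℝ := Real.sqrt (1 + ‖x‖ ^ 2) with hjx_def
  have hjx1 : 1 ≤ jx := one_le_jap _
  have hjx0 : 0 < jx := lt_of_lt_of_le one_pos hjx1
  have hxjx : ‖x‖ ≤ jx := le_jap _ (norm_nonneg x)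
  have hRHS0 : 0 ≤ (K + 1) * B * ρ ^ δ₀ * s ^ (-ℓ) * jx ^ (-m) := by positivity
  have hsm : ∀ a : ℝ, ContDiff ℝ (⊤ : ℕ∞) (fun y : EuclideanSpace ℝ (Fin ν) => χ₀ (a • y)) := by
    intro a
    exact hχsmooth.comp ((a • ContinuousLinearMap.id ℝ (EuclideanSpace ℝ (Fin ν))).contDiff)
  by_cases hcase1 : ρ * ‖x‖ < 1
  · have hev : (fun y : EuclideanSpace ℝ (Fin ν) => V y * χ₀ (ρ • y) * χ₀ (c • y))
        =ᶠ[nhds x] (fun _ => (0:ℝ)) := by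
      have hopen : IsOpen {y : EuclideanSpace ℝ (Fin ν) | ρ * ‖y‖ < 1} :=
        isOpen_lt (continuous_const.mul continuous_norm) continuous_const
      filter_upwards [hopen.mem_nhds hcase1] with y hy
      have : χ₀ (ρ • y) = 0 := hχ0 _ (by
        rw [norm_smul, Real.norm_eq_abs, abs_of_pos hρ0]; exact le_of_lt hy)
      simp [this]
    rw [iteratedFDeriv_congr_nhds hev n, iteratedFDeriv_zero_fun]
    simpa using hRHS0
  by_cases hcase2 : c * ‖x‖ < 1
  · have hev : (fun y : EuclideanSpace ℝ (Fin ν) => V y * χ₀ (ρ • y) * χ₀ (c • y))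
        =ᶠ[nhds x] (fun _ => (0:ℝ)) := by
      have hopen : IsOpen {y : EuclideanSpace ℝ (Fin ν) | c * ‖y‖ < 1} :=
        isOpen_lt (continuous_const.mul continuous_norm) continuous_const
      filter_upwards [hopen.mem_nhds hcase2] with y hy
      have : χ₀ (c • y) = 0 := hχ0 _ (by
        rw [norm_smul, Real.norm_eq_abs, abs_of_pos hc0]; exact le_of_lt hy)
      simp [this]
    rw [iteratedFDeriv_congr_nhds hev n, iteratedFDeriv_zero_fun]
    simpa using hRHS0
  push_neg at hcase1 hcase2
  have hx1 : 1 ≤ ‖x‖ := hcase1.trans (mul_le_of_le_one_left (norm_nonneg x) hρ1.le)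
  have hx0 : 0 < ‖x‖ := lt_of_lt_of_le one_pos hx1
  have hxρ : 1 / ρ ≤ ‖x‖ := by rw [div_le_iff₀ hρ0]; linarith [hcase1]
  have hxc : 1 / c ≤ ‖x‖ := by rw [div_le_iff₀ hc0]; linarith [hcase2]
  have hjx2 : jx ≤ Real.sqrt 2 * ‖x‖ := by
    rw [hjx_def, show Real.sqrt 2 * ‖x‖ = Real.sqrt (2 * ‖x‖ ^ 2) by
      rw [Real.sqrt_mul (by norm_num), Real.sqrt_sq (norm_nonneg x)]]
    exact Real.sqrt_le_sqrt (by nlinarith)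
  -- bounds for the three factors
  have hchi_term : ∀ a : ℝ, 0 < a → 1 ≤ a * ‖x‖ → ∀ k, k ≤ n →
      ‖iteratedFDeriv ℝ k (fun y : EuclideanSpace ℝ (Fin ν) => χ₀ (a • y)) x‖ ≤
        M * (2 * Real.sqrt 2) ^ k * jx ^ (-(k:ℝ)) := by
    intro a ha0 hax k hk
    rcases Nat.eq_zero_or_pos k with rfl | hkpos
    · rw [norm_iteratedFDeriv_zero]
      simp only [pow_zero, Nat.cast_zero, neg_zero, Real.rpow_zero, mul_one]
      calc ‖χ₀ (a • x)‖ ≤ 1 := by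
            rw [Real.norm_eq_abs, abs_of_nonneg (hχ01 _).1]; exact (hχ01 _).2
        _ ≤ M := hM1
    by_cases h2a : 2 < a * ‖x‖
    · have hev : (fun y : EuclideanSpace ℝ (Fin ν) => χ₀ (a • y)) =ᶠ[nhds x]
          (fun _ => (1:ℝ)) := by
        have hopen : IsOpen {y : EuclideanSpace ℝ (Fin ν) | 2 < a * ‖y‖} :=
          isOpen_lt continuous_const (continuous_const.mul continuous_norm)
        filter_upwards [hopen.mem_nhds h2a] with y hy
        exact hχ1 _ (by rw [norm_smul, Real.norm_eq_abs, abs_of_pos ha0]; exact hy.le)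
      rw [iteratedFDeriv_congr_nhds hev,
        iteratedFDeriv_const_of_ne (Nat.pos_iff_ne_zero.mp hkpos)]
      simp only [Pi.zero_apply, norm_zero]
      positivity
    · push_neg at h2a
      have ha2 : a ≤ 2 / ‖x‖ := by rw [le_div_iff₀ hx0]; exact h2a
      calc ‖iteratedFDeriv ℝ k (fun y => χ₀ (a • y)) x‖
          ≤ ‖iteratedFDeriv ℝ k χ₀ (a • x)‖ * |a| ^ k := scale_bound χ₀ hχsmooth a k x
        _ ≤ M * (2 / ‖x‖) ^ k := by
            gcongr
            · exact hM k hk _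
            · rw [abs_of_pos ha0]; exact ha2
        _ ≤ M * (2 * Real.sqrt 2 / jx) ^ k := by
            have hdd : 2 / ‖x‖ ≤ 2 * Real.sqrt 2 / jx := by
              rw [div_le_div_iff₀ hx0 hjx0]; nlinarith [hjx2]
            have h' := pow_le_pow_left₀ (by positivity : (0:ℝ) ≤ 2 / ‖x‖) hdd k
            exact mul_le_mul_of_nonneg_left h' hM0.le
        _ = M * (2 * Real.sqrt 2) ^ k * jx ^ (-(k:ℝ)) := by
            rw [div_pow, Real.rpow_neg hjx0.le, Real.rpow_natCast]
            ring
  have hV_term : ∀ j : ℕ, ‖iteratedFDeriv ℝ j V x‖ ≤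
      max (CV j) 1 * (jx ^ (-δ) * jx ^ (-(j:ℝ))) := by
    intro j
    have h1 := hVbound j x
    rw [← hjx_def] at h1
    refine h1.trans ?_
    rw [show jx ^ (-δ) * jx ^ (-(j:ℝ)) = jx ^ (-(δ + (j:ℝ))) by
      rw [← Real.rpow_add hjx0]; ring_nf]
    gcongr
    exact le_max_left _ _
  -- Leibniz expansion
  have hVρ : ContDiff ℝ (⊤ : ℕ∞) (fun y : EuclideanSpace ℝ (Fin ν) => V y * χ₀ (ρ • y)) :=
    hVsmooth.mul (hsm ρ)
  have step1 : ‖iteratedFDeriv ℝ n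
      (fun y : EuclideanSpace ℝ (Fin ν) => V y * χ₀ (ρ • y) * χ₀ (c • y)) x‖ ≤
      ∑ i ∈ Finset.range (n+1), (n.choose i : ℝ) *
        ‖iteratedFDeriv ℝ i (fun y : EuclideanSpace ℝ (Fin ν) => V y * χ₀ (ρ • y)) x‖ *
        ‖iteratedFDeriv ℝ (n - i) (fun y : EuclideanSpace ℝ (Fin ν) => χ₀ (c • y)) x‖ :=
    norm_iteratedFDeriv_mul_le hVρ (hsm c) x (by exact_mod_cast le_top)
  have step2 : ∀ i : ℕ,
      ‖iteratedFDeriv ℝ i (fun y : EuclideanSpace ℝ (Fin ν) => V y * χ₀ (ρ • y)) x‖ ≤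
      ∑ j ∈ Finset.range (i+1), (i.choose j : ℝ) * ‖iteratedFDeriv ℝ j V x‖ *
        ‖iteratedFDeriv ℝ (i - j) (fun y : EuclideanSpace ℝ (Fin ν) => χ₀ (ρ • y)) x‖ :=
    fun i => norm_iteratedFDeriv_mul_le hVsmooth (hsm ρ) x (by exact_mod_cast le_top)
  have hkey : ∀ i ∈ Finset.range (n+1), ∀ j ∈ Finset.range (i+1),
      (n.choose i : ℝ) * (i.choose j : ℝ) *
        (‖iteratedFDeriv ℝ j V x‖ *
         ‖iteratedFDeriv ℝ (i-j) (fun y : EuclideanSpace ℝ (Fin ν) => χ₀ (ρ • y)) x‖ *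
         ‖iteratedFDeriv ℝ (n-i) (fun y : EuclideanSpace ℝ (Fin ν) => χ₀ (c • y)) x‖) ≤
      (n.choose i : ℝ) * (i.choose j : ℝ) * (max (CV j) 1) *
        (M * M * (2 * Real.sqrt 2) ^ n) * jx ^ (-(δ + (n:ℝ))) := by
    intro i hi j hj
    have hi' : i ≤ n := Nat.lt_succ_iff.mp (Finset.mem_range.mp hi)
    have hj' : j ≤ i := Nat.lt_succ_iff.mp (Finset.mem_range.mp hj)
    have hmax0 : (0:ℝ) ≤ max (CV j) 1 := le_trans zero_le_one (le_max_right _ _)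
    have hb1 := hV_term j
    have hb2 := hchi_term ρ hρ0 hcase1 (i-j) (le_trans (Nat.sub_le _ _) hi')
    have hb3 := hchi_term c hc0 hcase2 (n-i) (Nat.sub_le _ _)
    have hprod : ‖iteratedFDeriv ℝ j V x‖ *
        ‖iteratedFDeriv ℝ (i-j) (fun y : EuclideanSpace ℝ (Fin ν) => χ₀ (ρ • y)) x‖ *
        ‖iteratedFDeriv ℝ (n-i) (fun y : EuclideanSpace ℝ (Fin ν) => χ₀ (c • y)) x‖ ≤
        (max (CV j) 1 * (jx ^ (-δ) * jx ^ (-(j:ℝ)))) *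
        (M * (2 * Real.sqrt 2) ^ (i-j) * jx ^ (-(((i-j):ℕ):ℝ))) *
        (M * (2 * Real.sqrt 2) ^ (n-i) * jx ^ (-(((n-i):ℕ):ℝ))) := by
      exact mul_le_mul (mul_le_mul hb1 hb2 (norm_nonneg _) (by positivity)) hb3
        (norm_nonneg _) (by positivity)
    have hpow : (2 * Real.sqrt 2) ^ (i-j) * (2 * Real.sqrt 2) ^ (n-i) ≤
        (2 * Real.sqrt 2) ^ n := by
      rw [← pow_add]
      exact pow_le_pow_right₀ h2s2 (by omega)
    have hjoin : jx ^ (-δ) * jx ^ (-(j:ℝ)) * jx ^ (-(((i-j):ℕ):ℝ)) * jx ^ (-(((n-i):ℕ):ℝ))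
        = jx ^ (-(δ + (n:ℝ))) := by
      rw [← Real.rpow_add hjx0, ← Real.rpow_add hjx0, ← Real.rpow_add hjx0]
      congr 1
      push_cast [Nat.cast_sub hj', Nat.cast_sub hi']
      ring
    calc (n.choose i : ℝ) * (i.choose j : ℝ) *
        (‖iteratedFDeriv ℝ j V x‖ *
         ‖iteratedFDeriv ℝ (i-j) (fun y : EuclideanSpace ℝ (Fin ν) => χ₀ (ρ • y)) x‖ *
         ‖iteratedFDeriv ℝ (n-i) (fun y : EuclideanSpace ℝ (Fin ν) => χ₀ (c • y)) x‖)
        ≤ (n.choose i : ℝ) * (i.choose j : ℝ) *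
          ((max (CV j) 1 * (jx ^ (-δ) * jx ^ (-(j:ℝ)))) *
           (M * (2 * Real.sqrt 2) ^ (i-j) * jx ^ (-(((i-j):ℕ):ℝ))) *
           (M * (2 * Real.sqrt 2) ^ (n-i) * jx ^ (-(((n-i):ℕ):ℝ)))) := by
          exact mul_le_mul_of_nonneg_left hprod (by positivity)
      _ = (n.choose i : ℝ) * (i.choose j : ℝ) * (max (CV j) 1) *
          (M * M * ((2 * Real.sqrt 2) ^ (i-j) * (2 * Real.sqrt 2) ^ (n-i))) *
          (jx ^ (-δ) * jx ^ (-(j:ℝ)) * jx ^ (-(((i-j):ℕ):ℝ)) * jx ^ (-(((n-i):ℕ):ℝ))) := by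
          ring
      _ ≤ (n.choose i : ℝ) * (i.choose j : ℝ) * (max (CV j) 1) *
          (M * M * (2 * Real.sqrt 2) ^ n) *
          (jx ^ (-δ) * jx ^ (-(j:ℝ)) * jx ^ (-(((i-j):ℕ):ℝ)) * jx ^ (-(((n-i):ℕ):ℝ))) := by
          gcongr
      _ = (n.choose i : ℝ) * (i.choose j : ℝ) * (max (CV j) 1) *
          (M * M * (2 * Real.sqrt 2) ^ n) * jx ^ (-(δ + (n:ℝ))) := by
          rw [hjoin]
  -- final scalar estimate
  have hsplit : jx ^ (-(δ + (n:ℝ))) = jx ^ (-δ₀) * jx ^ (-(ℓ+ε)) * jx ^ (-m) := by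
    rw [← Real.rpow_add hjx0, ← Real.rpow_add hjx0]
    congr 1
    rw [hε_def]; ring
  have h1 : jx ^ (-δ₀) ≤ ρ ^ δ₀ := rpow_neg_le hρ0 (hxρ.trans hxjx) hδ₀.le
  have h2 : jx ^ (-(ℓ+ε)) ≤ B * s ^ (-ℓ) := by
    have hc' : jx ^ (-(ℓ+ε)) ≤ c ^ (ℓ+ε) := rpow_neg_le hc0 (hxc.trans hxjx) (by linarith)
    have hceq : c ^ (ℓ+ε) = L ^ (ℓ+ε) * s ^ (-(ℓ+ε)) := by
      rw [hc_def, Real.div_rpow (by linarith : (0:ℝ) ≤ L) hs0.le, Real.rpow_neg hs0.le,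
        div_eq_mul_inv]
    have hLB : L ^ (ℓ+ε) ≤ B * s ^ ε := hB s hs1
    calc jx ^ (-(ℓ+ε)) ≤ L ^ (ℓ+ε) * s ^ (-(ℓ+ε)) := hceq ▸ hc'
      _ ≤ (B * s ^ ε) * s ^ (-(ℓ+ε)) :=
          mul_le_mul_of_nonneg_right hLB (Real.rpow_nonneg hs0.le _)
      _ = B * s ^ (-ℓ) := by
          rw [mul_assoc, ← Real.rpow_add hs0, show ε + -(ℓ+ε) = -ℓ by ring]
  have hfinal : K * jx ^ (-(δ + (n:ℝ))) ≤ (K+1) * B * ρ ^ δ₀ * s ^ (-ℓ) * jx ^ (-m) := by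
    calc K * jx ^ (-(δ + (n:ℝ))) = K * (jx ^ (-δ₀) * jx ^ (-(ℓ+ε)) * jx ^ (-m)) := by
          rw [hsplit]
      _ ≤ (K+1) * (ρ ^ δ₀ * (B * s ^ (-ℓ)) * jx ^ (-m)) := by
          gcongr
          linarith
      _ = (K+1) * B * ρ ^ δ₀ * s ^ (-ℓ) * jx ^ (-m) := by ring
  refine le_trans (le_trans step1 ?_) hfinal
  calc (∑ i ∈ Finset.range (n+1), (n.choose i : ℝ) *
        ‖iteratedFDeriv ℝ i (fun y : EuclideanSpace ℝ (Fin ν) => V y * χ₀ (ρ • y)) x‖ *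
        ‖iteratedFDeriv ℝ (n - i) (fun y : EuclideanSpace ℝ (Fin ν) => χ₀ (c • y)) x‖)
      ≤ ∑ i ∈ Finset.range (n+1), (n.choose i : ℝ) *
        (∑ j ∈ Finset.range (i+1), (i.choose j : ℝ) * ‖iteratedFDeriv ℝ j V x‖ *
          ‖iteratedFDeriv ℝ (i - j) (fun y : EuclideanSpace ℝ (Fin ν) => χ₀ (ρ • y)) x‖) *
        ‖iteratedFDeriv ℝ (n - i) (fun y : EuclideanSpace ℝ (Fin ν) => χ₀ (c • y)) x‖ := by
        refine Finset.sum_le_sum fun i hi => ?_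
        exact mul_le_mul_of_nonneg_right
          (mul_le_mul_of_nonneg_left (step2 i) (by positivity)) (norm_nonneg _)
    _ = ∑ i ∈ Finset.range (n+1), ∑ j ∈ Finset.range (i+1),
        (n.choose i : ℝ) * (i.choose j : ℝ) *
        (‖iteratedFDeriv ℝ j V x‖ *
         ‖iteratedFDeriv ℝ (i-j) (fun y : EuclideanSpace ℝ (Fin ν) => χ₀ (ρ • y)) x‖ *
         ‖iteratedFDeriv ℝ (n-i) (fun y : EuclideanSpace ℝ (Fin ν) => χ₀ (c • y)) x‖) := by
        refine Finset.sum_congr rfl fun i hi => ?_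
        rw [Finset.mul_sum, Finset.sum_mul]
        refine Finset.sum_congr rfl fun j hj => by ring
    _ ≤ ∑ i ∈ Finset.range (n+1), ∑ j ∈ Finset.range (i+1),
        (n.choose i : ℝ) * (i.choose j : ℝ) * (max (CV j) 1) *
        (M * M * (2 * Real.sqrt 2) ^ n) * jx ^ (-(δ + (n:ℝ))) :=
        Finset.sum_le_sum fun i hi => Finset.sum_le_sum fun j hj => hkey i hi j hj
    _ = K * jx ^ (-(δ + (n:ℝ))) := by
        rw [hK_def, Finset.sum_mul]
        refine Finset.sum_congr rfl fun i _ => ?_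
        rw [Finset.sum_mul]
end

section
/- Let f : [0,∞) → [0,∞) be continuously differentiable, uniformly bounded, with f(t) → 0 as t → ∞, and suppose |f'(t)| ≤ C t^{−1−δ} f(t)^{3/4} + C t^{−2−δ} f(t)^{1/2} for all t > 1, where 0 < δ ≤ 1 and C > 0. Then there exists a constant C' > 0 such that f(t) ≤ C' t^{−4δ} for all t > 1. -/
open Filter MeasureTheory intervalIntegral Real Set


/-- the bootstrap of Lemma 9.7.
If `f ≥ 0` is `C¹`, uniformly bounded, `f(t) → 0` as `t → ∞`, and
`|f'(t)| ≤ C t^{−1−δ} f(t)^{3/4} + C t^{−2−δ} f(t)^{1/2}` for `t > 1` (with `0 < δ ≤ 1`,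
`C > 0`), then `f(t) ≤ C' t^{−4δ}` for some `C' > 0` and all `t > 1`. -/
theorem bootstrap_decay (δ C : ℝ) (hδ0 : 0 < δ) (hδ1 : δ ≤ 1) (hC : 0 < C)
    (f f' : ℝ → ℝ)
    (hderiv : ∀ t : ℝ, 0 ≤ t → HasDerivAt f (f' t) t)
    (hcont : ContinuousOn f' (Set.Ici 0))
    (hpos : ∀ t : ℝ, 0 ≤ t → 0 ≤ f t)
    (hbdd : ∃ M : ℝ, ∀ t : ℝ, 0 ≤ t → f t ≤ M)
    (hlim : Filter.Tendsto f Filter.atTop (nhds 0))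
    (hineq : ∀ t : ℝ, 1 < t →
      |f' t| ≤ C * t ^ (-1 - δ) * f t ^ ((3 : ℝ) / 4)
        + C * t ^ (-2 - δ) * f t ^ ((1 : ℝ) / 2)) :
    ∃ C' : ℝ, 0 < C' ∧ ∀ t : ℝ, 1 < t → f t ≤ C' * t ^ (-(4 * δ)) := by
  obtain ⟨M, hM⟩ := hbdd
  set A : ℝ := max 1 (max M ((2 * C / δ) ^ (4 : ℕ))) with hAdef
  have hA1 : (1 : ℝ) ≤ A := le_max_left _ _
  have hA0 : (0 : ℝ) < A := lt_of_lt_of_le one_pos hA1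
  have hAM : M ≤ A := (le_max_left _ _).trans (le_max_right _ _)
  have hACδ : (2 * C / δ) ^ (4 : ℕ) ≤ A := (le_max_right _ _).trans (le_max_right _ _)
  have hCδ0 : (0 : ℝ) ≤ 2 * C / δ := by positivity
  have hquarter : 2 * C / δ ≤ A ^ ((1:ℝ)/4) := by
    have h1 : (((2 * C / δ) ^ (4:ℕ) : ℝ)) ^ ((1:ℝ)/4) ≤ A ^ ((1:ℝ)/4) :=
      Real.rpow_le_rpow (by positivity) hACδ (by norm_num)
    rwa [← Real.rpow_natCast (2*C/δ) 4, ← Real.rpow_mul hCδ0,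
      show ((4:ℕ):ℝ) * (1/4) = 1 by norm_num, Real.rpow_one] at h1
  -- the key bootstrap step
  have key : ∀ β : ℝ, 0 ≤ β → β ≤ 4 * δ → (∀ s : ℝ, 1 < s → f s ≤ A * s ^ (-β)) →
      ∀ s : ℝ, 1 < s → f s ≤ A * s ^ (-(δ + 3 * β / 4)) := by
    intro β hβ0 hβ4 hind s hs
    have hs0 : (0:ℝ) < s := lt_trans one_pos hs
    set e₁ : ℝ := δ + 3 * β / 4 with he₁
    set e₂ : ℝ := 1 + δ + β / 2 with he₂
    have he₁0 : 0 < e₁ := by rw [he₁]; linarith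
    have he₂0 : 0 < e₂ := by rw [he₂]; linarith
    have hδe₁ : δ ≤ e₁ := by rw [he₁]; linarith
    have hδe₂ : δ ≤ e₂ := by rw [he₂]; linarith
    have he12 : e₁ ≤ e₂ := by rw [he₁, he₂]; nlinarith
    set B : ℝ := C * A ^ ((3:ℝ)/4) / e₁ * s ^ (-e₁) + C * A ^ ((1:ℝ)/2) / e₂ * s ^ (-e₂)
      with hB
    have hstep : ∀ T : ℝ, s ≤ T → f s ≤ f T + B := by
      intro T hT
      have hsub : Set.uIcc s T ⊆ Set.Ici (0:ℝ) := by
        rw [Set.uIcc_of_le hT]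
        exact fun x hx => le_trans hs0.le hx.1
      have h0x : ∀ x ∈ Set.uIcc s T, x ≠ 0 := by
        rw [Set.uIcc_of_le hT]
        exact fun x hx => (lt_of_lt_of_le hs0 hx.1).ne'
      have hftc : ∫ τ in s..T, f' τ = f T - f s :=
        intervalIntegral.integral_eq_sub_of_hasDerivAt
          (fun τ hτ => hderiv τ (hsub hτ)) ((hcont.mono hsub).intervalIntegrable)
      have hint_abs : IntervalIntegrable (fun τ => |f' τ|) volume s T :=
        ((hcont.mono hsub).abs).intervalIntegrable
      have hci : ∀ r : ℝ, IntervalIntegrable (fun τ : ℝ => τ ^ r) volume s T := by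
        intro r
        exact (continuousOn_id.rpow_const (fun x hx => Or.inl (h0x x hx))).intervalIntegrable
      have hint1 : IntervalIntegrable (fun τ : ℝ => C * A ^ ((3:ℝ)/4) * τ ^ (-1 - e₁))
          volume s T := (hci (-1 - e₁)).const_mul _
      have hint2 : IntervalIntegrable (fun τ : ℝ => C * A ^ ((1:ℝ)/2) * τ ^ (-1 - e₂))
          volume s T := (hci (-1 - e₂)).const_mul _
      have hint_g : IntervalIntegrable
          (fun τ : ℝ => C * A ^ ((3:ℝ)/4) * τ ^ (-1 - e₁) + C * A ^ ((1:ℝ)/2) * τ ^ (-1 - e₂))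
          volume s T := hint1.add hint2
      -- pointwise bound
      have hpt : ∀ τ ∈ Set.Icc s T, |f' τ| ≤
          C * A ^ ((3:ℝ)/4) * τ ^ (-1 - e₁) + C * A ^ ((1:ℝ)/2) * τ ^ (-1 - e₂) := by
        intro τ hτ
        have hτ1 : 1 < τ := lt_of_lt_of_le hs hτ.1
        have hτ0 : (0:ℝ) < τ := lt_trans one_pos hτ1
        have hfτ : f τ ≤ A * τ ^ (-β) := hind τ hτ1
        have hf34 : f τ ^ ((3:ℝ)/4) ≤ A ^ ((3:ℝ)/4) * τ ^ (-β * (3/4)) := by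
          calc f τ ^ ((3:ℝ)/4) ≤ (A * τ ^ (-β)) ^ ((3:ℝ)/4) :=
                Real.rpow_le_rpow (hpos τ hτ0.le) hfτ (by norm_num)
            _ = A ^ ((3:ℝ)/4) * τ ^ (-β * (3/4)) := by
                rw [Real.mul_rpow hA0.le (Real.rpow_nonneg hτ0.le _),
                  ← Real.rpow_mul hτ0.le]
        have hf12 : f τ ^ ((1:ℝ)/2) ≤ A ^ ((1:ℝ)/2) * τ ^ (-β * (1/2)) := by
          calc f τ ^ ((1:ℝ)/2) ≤ (A * τ ^ (-β)) ^ ((1:ℝ)/2) :=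
                Real.rpow_le_rpow (hpos τ hτ0.le) hfτ (by norm_num)
            _ = A ^ ((1:ℝ)/2) * τ ^ (-β * (1/2)) := by
                rw [Real.mul_rpow hA0.le (Real.rpow_nonneg hτ0.le _),
                  ← Real.rpow_mul hτ0.le]
        have h1 : C * τ ^ (-1 - δ) * f τ ^ ((3:ℝ)/4) ≤ C * A ^ ((3:ℝ)/4) * τ ^ (-1 - e₁) := by
          calc C * τ ^ (-1 - δ) * f τ ^ ((3:ℝ)/4)
              ≤ C * τ ^ (-1 - δ) * (A ^ ((3:ℝ)/4) * τ ^ (-β * (3/4))) := by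
                apply mul_le_mul_of_nonneg_left hf34 (by positivity)
            _ = C * A ^ ((3:ℝ)/4) * (τ ^ (-1 - δ) * τ ^ (-β * (3/4))) := by ring
            _ = C * A ^ ((3:ℝ)/4) * τ ^ (-1 - e₁) := by
                rw [← Real.rpow_add hτ0]; congr 1; rw [he₁]; ring
        have h2 : C * τ ^ (-2 - δ) * f τ ^ ((1:ℝ)/2) ≤ C * A ^ ((1:ℝ)/2) * τ ^ (-1 - e₂) := by
          calc C * τ ^ (-2 - δ) * f τ ^ ((1:ℝ)/2)
              ≤ C * τ ^ (-2 - δ) * (A ^ ((1:ℝ)/2) * τ ^ (-β * (1/2))) := by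
                apply mul_le_mul_of_nonneg_left hf12 (by positivity)
            _ = C * A ^ ((1:ℝ)/2) * (τ ^ (-2 - δ) * τ ^ (-β * (1/2))) := by ring
            _ = C * A ^ ((1:ℝ)/2) * τ ^ (-1 - e₂) := by
                rw [← Real.rpow_add hτ0]; congr 1; rw [he₂]; ring
        exact (hineq τ hτ1).trans (add_le_add h1 h2)
      -- integral of the bound
      have hI : ∀ e : ℝ, 0 < e → ∫ τ in s..T, τ ^ (-1 - e) = (s ^ (-e) - T ^ (-e)) / e := by
        intro e he
        have h0 : (0:ℝ) ∉ Set.uIcc s T := fun h => (h0x 0 h) rfl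
        rw [integral_rpow (Or.inr ⟨by intro h; apply he.ne'; linarith, h0⟩),
          show (-1 - e + 1 : ℝ) = -e by ring, div_neg, ← neg_div, neg_sub]
      have hIle : (∫ τ in s..T,
          (C * A ^ ((3:ℝ)/4) * τ ^ (-1 - e₁) + C * A ^ ((1:ℝ)/2) * τ ^ (-1 - e₂))) ≤ B := by
        rw [intervalIntegral.integral_add hint1 hint2,
          intervalIntegral.integral_const_mul, intervalIntegral.integral_const_mul,
          hI e₁ he₁0, hI e₂ he₂0, hB]
        have hT1 : (0:ℝ) ≤ T ^ (-e₁) := Real.rpow_nonneg (by linarith) _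
        have hT2 : (0:ℝ) ≤ T ^ (-e₂) := Real.rpow_nonneg (by linarith) _
        have k1 : C * A ^ ((3:ℝ)/4) * ((s ^ (-e₁) - T ^ (-e₁)) / e₁)
            ≤ C * A ^ ((3:ℝ)/4) / e₁ * s ^ (-e₁) := by
          have h := mul_le_mul_of_nonneg_left
            (by linarith : s ^ (-e₁) - T ^ (-e₁) ≤ s ^ (-e₁))
            (by positivity : (0:ℝ) ≤ C * A ^ ((3:ℝ)/4) / e₁)
          calc C * A ^ ((3:ℝ)/4) * ((s ^ (-e₁) - T ^ (-e₁)) / e₁)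
              = C * A ^ ((3:ℝ)/4) / e₁ * (s ^ (-e₁) - T ^ (-e₁)) := by ring
            _ ≤ C * A ^ ((3:ℝ)/4) / e₁ * s ^ (-e₁) := h
        have k2 : C * A ^ ((1:ℝ)/2) * ((s ^ (-e₂) - T ^ (-e₂)) / e₂)
            ≤ C * A ^ ((1:ℝ)/2) / e₂ * s ^ (-e₂) := by
          have h := mul_le_mul_of_nonneg_left
            (by linarith : s ^ (-e₂) - T ^ (-e₂) ≤ s ^ (-e₂))
            (by positivity : (0:ℝ) ≤ C * A ^ ((1:ℝ)/2) / e₂)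
          calc C * A ^ ((1:ℝ)/2) * ((s ^ (-e₂) - T ^ (-e₂)) / e₂)
              = C * A ^ ((1:ℝ)/2) / e₂ * (s ^ (-e₂) - T ^ (-e₂)) := by ring
            _ ≤ C * A ^ ((1:ℝ)/2) / e₂ * s ^ (-e₂) := h
        exact add_le_add k1 k2
      have habs : f s - f T ≤ ∫ τ in s..T, |f' τ| := by
        have h1 : f s - f T = -∫ τ in s..T, f' τ := by rw [hftc]; ring
        rw [h1]
        calc -∫ τ in s..T, f' τ ≤ |∫ τ in s..T, f' τ| := neg_le_abs _
          _ ≤ ∫ τ in s..T, |f' τ| := intervalIntegral.abs_integral_le_integral_abs hT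
      have hmono : (∫ τ in s..T, |f' τ|) ≤ ∫ τ in s..T,
          (C * A ^ ((3:ℝ)/4) * τ ^ (-1 - e₁) + C * A ^ ((1:ℝ)/2) * τ ^ (-1 - e₂)) :=
        intervalIntegral.integral_mono_on hT hint_abs hint_g hpt
      have := le_trans habs (le_trans hmono hIle)
      linarith
    -- take T → ∞
    have hfsB : f s ≤ B := by
      have hTlim : Tendsto (fun T => f T + B) atTop (nhds (0 + B)) :=
        hlim.add tendsto_const_nhds
      have h := ge_of_tendsto hTlim (Filter.eventually_atTop.2 ⟨s, hstep⟩)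
      linarith
    -- final algebra:  B ≤ A * s^{-e₁}
    have hse : s ^ (-e₂) ≤ s ^ (-e₁) :=
      Real.rpow_le_rpow_of_exponent_le hs.le (by linarith)
    have hA12 : A ^ ((1:ℝ)/2) ≤ A ^ ((3:ℝ)/4) :=
      Real.rpow_le_rpow_of_exponent_le hA1 (by norm_num)
    have hApos34 : (0:ℝ) < A ^ ((3:ℝ)/4) := Real.rpow_pos_of_pos hA0 _
    have hApos12 : (0:ℝ) < A ^ ((1:ℝ)/2) := Real.rpow_pos_of_pos hA0 _
    have hspos1 : (0:ℝ) < s ^ (-e₁) := Real.rpow_pos_of_pos hs0 _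
    have hspos2 : (0:ℝ) < s ^ (-e₂) := Real.rpow_pos_of_pos hs0 _
    have hb1 : C * A ^ ((3:ℝ)/4) / e₁ * s ^ (-e₁) ≤ C * A ^ ((3:ℝ)/4) / δ * s ^ (-e₁) := by
      apply mul_le_mul_of_nonneg_right _ hspos1.le
      exact div_le_div₀ (by positivity) le_rfl hδ0 hδe₁
    have hb2 : C * A ^ ((1:ℝ)/2) / e₂ * s ^ (-e₂) ≤ C * A ^ ((3:ℝ)/4) / δ * s ^ (-e₁) := by
      apply mul_le_mul _ hse hspos2.le (by positivity)
      exact div_le_div₀ (by positivity)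
        (mul_le_mul_of_nonneg_left hA12 hC.le) hδ0 hδe₂
    have hBle : B ≤ 2 * C / δ * A ^ ((3:ℝ)/4) * s ^ (-e₁) := by
      have : C * A ^ ((3:ℝ)/4) / δ * s ^ (-e₁) + C * A ^ ((3:ℝ)/4) / δ * s ^ (-e₁)
          = 2 * C / δ * A ^ ((3:ℝ)/4) * s ^ (-e₁) := by ring
      rw [hB]; linarith
    have hfinal : 2 * C / δ * A ^ ((3:ℝ)/4) * s ^ (-e₁) ≤ A * s ^ (-e₁) := by
      have h1 : 2 * C / δ * A ^ ((3:ℝ)/4) ≤ A ^ ((1:ℝ)/4) * A ^ ((3:ℝ)/4) :=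
        mul_le_mul_of_nonneg_right hquarter hApos34.le
      have h2 : A ^ ((1:ℝ)/4) * A ^ ((3:ℝ)/4) = A := by
        rw [← Real.rpow_add hA0]; norm_num
      calc 2 * C / δ * A ^ ((3:ℝ)/4) * s ^ (-e₁)
          ≤ A ^ ((1:ℝ)/4) * A ^ ((3:ℝ)/4) * s ^ (-e₁) :=
            mul_le_mul_of_nonneg_right h1 hspos1.le
        _ = A * s ^ (-e₁) := by rw [h2]
    exact hfsB.trans (hBle.trans hfinal)
  -- iterate
  have main : ∀ n : ℕ, ∀ s : ℝ, 1 < s → f s ≤ A * s ^ (-(4 * δ * (1 - (3/4 : ℝ) ^ n))) := by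
    intro n
    induction n with
    | zero =>
      intro s hs
      simp only [pow_zero, sub_self, mul_zero, neg_zero, Real.rpow_zero, mul_one]
      exact (hM s (by linarith)).trans hAM
    | succ n ih =>
      have hpow1 : ((3:ℝ)/4) ^ n ≤ 1 := pow_le_one₀ (by norm_num) (by norm_num)
      have hpow0 : (0:ℝ) ≤ ((3:ℝ)/4) ^ n := by positivity
      have hβ0 : 0 ≤ 4 * δ * (1 - (3/4:ℝ)^n) := by nlinarith
      have hβ4 : 4 * δ * (1 - (3/4:ℝ)^n) ≤ 4 * δ := by nlinarith
      intro s hs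
      have h := key _ hβ0 hβ4 ih s hs
      have heq : -(δ + 3 * (4 * δ * (1 - (3/4:ℝ)^n)) / 4) = -(4 * δ * (1 - (3/4:ℝ)^(n+1))) := by
        rw [pow_succ]; ring
      rwa [heq] at h
  -- pass to the limit n → ∞
  refine ⟨A, hA0, fun t ht => ?_⟩
  have ht0 : (0:ℝ) < t := lt_trans one_pos ht
  have h1 : Tendsto (fun n : ℕ => ((3:ℝ)/4) ^ n) atTop (nhds 0) :=
    tendsto_pow_atTop_nhds_zero_of_lt_one (by norm_num) (by norm_num)
  have h2 : Tendsto (fun n : ℕ => -(4 * δ * (1 - (3/4:ℝ) ^ n))) atTop (nhds (-(4 * δ))) := by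
    have h3 : Tendsto (fun n : ℕ => -(4 * δ) + 4 * δ * ((3/4:ℝ) ^ n)) atTop
        (nhds (-(4 * δ) + 4 * δ * 0)) := tendsto_const_nhds.add (h1.const_mul (4 * δ))
    rw [mul_zero, add_zero] at h3
    exact h3.congr (fun n => by ring)
  have h4 : Tendsto (fun n : ℕ => A * t ^ (-(4 * δ * (1 - (3/4:ℝ) ^ n)))) atTop
      (nhds (A * t ^ (-(4 * δ)))) :=
    (((Real.continuousAt_const_rpow ht0.ne').tendsto.comp h2).const_mul A)
  exact ge_of_tendsto h4 (Filter.Eventually.of_forall fun n => main n t ht)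
end

section
/- Let H be self-adjoint on ℋ and for each t > 1 let P(t) be a bounded operator such that (d/dt)⟨e^{itH}P(t)e^{−itH}f, f⟩ = t^{−1}‖Q(t)e^{−itH}f‖² + ⟨R(t)e^{−itH}f, e^{−itH}f⟩ with ‖P(t)‖ ≤ 1 and ‖R(t)‖ ≤ C t^{−2}. Then there is a constant M > 0 such that for all t > s > 1 and all f ∈ ℋ, ∫_s^t τ^{−1}‖Q(τ)e^{−iτH}f‖² dτ ≤ M²‖f‖². -/
open MeasureTheory Set

/-! Along the evolution, `τ ↦ ⟨P(τ)e^{-iτH}f, e^{-iτH}f⟩` stays in `[-‖f‖², ‖f‖²]`, and its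
derivative is the positive term `τ⁻¹‖Q(τ)e^{-iτH}f‖²` plus an error bounded by `Cτ⁻²‖f‖²`.
Integrating from `s` to `t`, the positive term is controlled by the total variation `2‖f‖²` plus
`C‖f‖² ∫₁^∞ τ⁻² dτ = C‖f‖²`, so `M = √(2 + C)` works. No integrability of the positive term is
needed: if it is integrable, the one-sided fundamental theorem of calculus bounds its integral,
and otherwise the Bochner integral is `0`. -/

theorem abs_re_inner_apply_self_le {𝕜 E : Type*} [RCLike 𝕜] [SeminormedAddCommGroup E]
    [InnerProductSpace 𝕜 E] {T : E →L[𝕜] E} {c : ℝ} (hT : ‖T‖ ≤ c) (x : E) :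
    |RCLike.re (inner 𝕜 (T x) x)| ≤ c * ‖x‖ ^ 2 :=
  calc |RCLike.re (inner 𝕜 (T x) x)|
      ≤ ‖inner 𝕜 (T x) x‖ := RCLike.abs_re_le_norm _
    _ ≤ ‖T x‖ * ‖x‖ := norm_inner_le_norm _ _
    _ ≤ ‖T‖ * ‖x‖ * ‖x‖ := by gcongr; exact T.le_opNorm x
    _ ≤ c * ‖x‖ ^ 2 := by rw [mul_assoc, ← sq]; gcongr

theorem intervalIntegral.integral_le_of_le_deriv {g g' φ : ℝ → ℝ} {s t B : ℝ} (hst : s ≤ t)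
    (hg : ∀ τ ∈ Icc s t, HasDerivAt g (g' τ) τ) (hφ : ∀ τ ∈ Ioo s t, φ τ ≤ g' τ)
    (hB : 0 ≤ B) (hgB : g t - g s ≤ B) :
    ∫ τ in s..t, φ τ ≤ B := by
  by_cases hφint : IntervalIntegrable φ volume s t
  · refine le_trans (integral_le_sub_of_hasDeriv_right_of_le hst
      (fun τ hτ => (hg τ hτ).continuousAt.continuousWithinAt)
      (fun τ hτ => (hg τ (Ioo_subset_Icc_self hτ)).hasDerivWithinAt)
      ((intervalIntegrable_iff_integrableOn_Icc_of_le hst).mp hφint) hφ) hgB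
  · rwa [intervalIntegral.integral_undef hφint]

theorem kato_smoothness_bound_general {ℋ : Type*} [NormedAddCommGroup ℋ] [InnerProductSpace ℂ ℋ]
    (U : ℝ → ℋ →L[ℂ] ℋ)
    (hUiso : ∀ (t : ℝ) (f : ℋ), ‖U t f‖ = ‖f‖)
    (P Q R : ℝ → ℋ →L[ℂ] ℋ) (C : ℝ) (hC : 0 ≤ C)
    (hP : ∀ t : ℝ, 1 < t → ‖P t‖ ≤ 1)
    (hR : ∀ t : ℝ, 1 < t → ‖R t‖ ≤ C * t ^ (-2 : ℝ))
    (hderiv : ∀ (f : ℋ) (t : ℝ), 1 < t →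
      HasDerivAt (fun τ : ℝ => (inner ℂ (P τ (U (-τ) f)) (U (-τ) f) : ℂ))
        (((t⁻¹ * ‖Q t (U (-t) f)‖ ^ 2 : ℝ) : ℂ)
          + (inner ℂ (R t (U (-t) f)) (U (-t) f) : ℂ)) t) :
    ∃ M : ℝ, 0 < M ∧ ∀ (f : ℋ) (s t : ℝ), 1 < s → s < t →
      (∫ τ in s..t, τ⁻¹ * ‖Q τ (U (-τ) f)‖ ^ 2) ≤ M ^ 2 * ‖f‖ ^ 2 := by
  refine ⟨√(2 + C), Real.sqrt_pos.mpr (by linarith), fun f s t hs hst => ?_⟩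
  rw [Real.sq_sqrt (by linarith)]
  have hCf : 0 ≤ C * ‖f‖ ^ 2 := mul_nonneg hC (sq_nonneg _)
  have hPf : ∀ τ, 1 < τ → |(inner ℂ (P τ (U (-τ) f)) (U (-τ) f)).re| ≤ ‖f‖ ^ 2 := fun τ hτ => by
    simpa [hUiso] using abs_re_inner_apply_self_le (hP τ hτ) (U (-τ) f)
  have hRf : ∀ τ, 1 < τ →
      -(C * ‖f‖ ^ 2 * (τ ^ 2)⁻¹) ≤ (inner ℂ (R τ (U (-τ) f)) (U (-τ) f)).re := fun τ hτ => by
    have := abs_re_inner_apply_self_le (hR τ hτ) (U (-τ) f)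
    rw [hUiso, Real.rpow_neg (by linarith), Real.rpow_two, RCLike.re_to_complex] at this
    linarith [neg_abs_le (inner ℂ (R τ (U (-τ) f)) (U (-τ) f)).re]
  -- Subtracting `C‖f‖²τ⁻¹` makes the derivative dominate `τ⁻¹‖Q(τ)e^{-iτH}f‖²`.
  refine intervalIntegral.integral_le_of_le_deriv hst.le
    (g := fun τ => (inner ℂ (P τ (U (-τ) f)) (U (-τ) f)).re - C * ‖f‖ ^ 2 * τ⁻¹)
    (g' := fun τ => τ⁻¹ * ‖Q τ (U (-τ) f)‖ ^ 2 + (inner ℂ (R τ (U (-τ) f)) (U (-τ) f)).re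
      + C * ‖f‖ ^ 2 * (τ ^ 2)⁻¹)
    (fun τ hτ => ?deriv) (fun τ hτ => ?lower) (by positivity) ?upper
  case deriv =>
    have hτ : 1 < τ := hs.trans_le hτ.1
    have hre := Complex.reCLM.hasFDerivAt.comp_hasDerivAt τ (hderiv f τ hτ)
    have hinv := (hasDerivAt_inv (by linarith : τ ≠ 0)).const_mul (C * ‖f‖ ^ 2)
    refine (hre.sub hinv).congr_deriv ?_
    simp only [Complex.reCLM_apply, Complex.add_re, Complex.ofReal_re]
    ring
  case lower =>
    have : 0 ≤ C * ‖f‖ ^ 2 * (τ ^ 2)⁻¹ := mul_nonneg hCf (by positivity)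
    linarith [hRf τ (hs.trans hτ.1)]
  case upper =>
    have hst' : s⁻¹ - t⁻¹ ≤ 1 := by
      linarith [inv_le_one_of_one_le₀ hs.le, inv_pos.mpr (by linarith : 0 < t)]
    have := mul_le_mul_of_nonneg_left hst' hCf
    linarith [abs_le.mp (hPf s hs), abs_le.mp (hPf t (hs.trans hst))]

/-- abstract Kato-smoothness / propagation bound from a positive Heisenberg
derivative.  `U t = e^{itH}` is the unitary group of `H`; `P(t), Q(t), R(t)` are bounded
families with `‖P(t)‖ ≤ 1`, `‖R(t)‖ ≤ C t^{−2}`, and, for every `f`,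
`d/dt ⟨P(t)e^{−itH}f, e^{−itH}f⟩ = t⁻¹‖Q(t)e^{−itH}f‖² + ⟨R(t)e^{−itH}f, e^{−itH}f⟩`.
Then there is `M > 0` with `∫_s^t τ⁻¹‖Q(τ)e^{−iτH}f‖² dτ ≤ M²‖f‖²` for all `t > s > 1`. -/
theorem kato_smoothness_bound {ℋ : Type*} [NormedAddCommGroup ℋ] [InnerProductSpace ℂ ℋ]
    [CompleteSpace ℋ]
    (U : ℝ → ℋ →L[ℂ] ℋ)
    (hU0 : U 0 = 1) (hUadd : ∀ s t : ℝ, U (s + t) = (U s).comp (U t))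
    (hUiso : ∀ (t : ℝ) (f : ℋ), ‖U t f‖ = ‖f‖)
    (P Q R : ℝ → ℋ →L[ℂ] ℋ) (C : ℝ) (hC : 0 ≤ C)
    (hP : ∀ t : ℝ, 1 < t → ‖P t‖ ≤ 1)
    (hR : ∀ t : ℝ, 1 < t → ‖R t‖ ≤ C * t ^ (-2 : ℝ))
    (hcont : ∀ f : ℋ, ContinuousOn
      (fun τ : ℝ => ((τ⁻¹ * ‖Q τ (U (-τ) f)‖ ^ 2 : ℝ) : ℂ)
        + (inner ℂ (R τ (U (-τ) f)) (U (-τ) f) : ℂ)) (Set.Ioi 1))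
    (hderiv : ∀ (f : ℋ) (t : ℝ), 1 < t →
      HasDerivAt (fun τ : ℝ => (inner ℂ (P τ (U (-τ) f)) (U (-τ) f) : ℂ))
        (((t⁻¹ * ‖Q t (U (-t) f)‖ ^ 2 : ℝ) : ℂ)
          + (inner ℂ (R t (U (-t) f)) (U (-t) f) : ℂ)) t) :
    ∃ M : ℝ, 0 < M ∧ ∀ (f : ℋ) (s t : ℝ), 1 < s → s < t →
      (∫ τ in s..t, τ⁻¹ * ‖Q τ (U (-τ) f)‖ ^ 2) ≤ M ^ 2 * ‖f‖ ^ 2 :=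
  kato_smoothness_bound_general U hUiso P Q R C hC hP hR hderiv
end
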